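/- Consider the finite volume scheme for the cross-diffusion Cahn-Hilliard system on an admissible mesh. Let p ∈ ℕ and assume U^p is nonnegative (U^p_{i,K} ≥ 0 for all i, K). Then any solution U^{p+1} of the scheme is nonnegative. If moreover U^p is strictly positive (U^p_{i,K} > 0 for all i, K), then any solution U^{p+1} is strictly positive. -/
import Mathlib


/-!
STATEMENT 17: Weak positivity of the finite volume scheme: if `U^p` is
nonnegative then any solution `U^{p+1}` of one step of the scheme is
nonnegative, and if `U^p` is strictly positive then any solution `U^{p+1}` is
strictly positive.
-/

open MeasureTheory

noncomputable section

/-- Mirror value `V_{Kσ}` of the discrete field `V` across the face `σ`,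
seen from the cell `K`. -/
def mirror {T F : Type*} [DecidableEq T] [DecidableEq F]
    (Fint : Finset F) (sideA sideB : F → T) (V : T → ℝ) (K : T) (σ : F) : ℝ :=
  if σ ∈ Fint then (if K = sideA σ then V (sideB σ) else V (sideA σ)) else V K

/-- Oriented jump `D_{Kσ}V = V_{Kσ} − V_K`. -/
def jump {T F : Type*} [DecidableEq T] [DecidableEq F]
    (Fint : Finset F) (sideA sideB : F → T) (V : T → ℝ) (K : T) (σ : F) : ℝ :=
  mirror Fint sideA sideB V K σ - V K

/-- The logarithmic mean used for the edge values: `0` if either argument is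
`≤ 0`, the common value if both are equal and positive, and
`(a−b)/(ln a − ln b)` otherwise. -/
def logMean (a b : ℝ) : ℝ :=
  if min a b ≤ 0 then 0 else if a = b then a else (a - b) / (Real.log a - Real.log b)

/-- Edge value `U_{i,σ}`: the logarithmic mean of the two adjacent cell values. -/
def edgeVal {T F : Type*} {n : ℕ} (sideA sideB : F → T)
    (Un : Fin (n + 1) → T → ℝ) (i : Fin (n + 1)) (σ : F) : ℝ :=
  logMean (Un i (sideA σ)) (Un i (sideB σ))

/-- The discrete auxiliary variable
`W_{0,K}^{p+1/2} = −(ε/m_K) Σ_{σ∈ℰ_{K,int}} τ_σ D_{Kσ}U_0^{p+1} + β(1 − 2U_{0,K}^p)`. -/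
def W0 {T F : Type*} [DecidableEq T] [DecidableEq F]
    (facesOf : T → Finset F) (Fint : Finset F) (sideA sideB : F → T)
    (τ : F → ℝ) (mK : T → ℝ) (ε β : ℝ) {n : ℕ}
    (Uc Un : Fin (n + 1) → T → ℝ) (K : T) : ℝ :=
  -(ε / mK K) * ∑ σ ∈ (facesOf K).filter (· ∈ Fint),
      τ σ * jump Fint sideA sideB (Un 0) K σ
    + β * (1 - 2 * Uc 0 K)

/-- The discrete fluxes `J_{i,Kσ}^{p+1}` of the scheme. -/
def dflux {T F : Type*} [DecidableEq T] [DecidableEq F]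
    (facesOf : T → Finset F) (Fint : Finset F) (sideA sideB : F → T)
    (τ : F → ℝ) (mK : T → ℝ) (ε β : ℝ) {n : ℕ}
    (Kc : Fin (n + 1) → Fin (n + 1) → ℝ)
    (Uc Un : Fin (n + 1) → T → ℝ) (i : Fin (n + 1)) (K : T) (σ : F) : ℝ :=
  if i = 0 then
    -(τ σ) * ∑ j ∈ Finset.univ.erase (0 : Fin (n + 1)), Kc j 0 *
        (edgeVal sideA sideB Un j σ * jump Fint sideA sideB (Un 0) K σ
          - edgeVal sideA sideB Un 0 σ * jump Fint sideA sideB (Un j) K σ)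
      - τ σ * ∑ j ∈ Finset.univ.erase (0 : Fin (n + 1)), Kc j 0 *
          edgeVal sideA sideB Un j σ * edgeVal sideA sideB Un 0 σ *
          jump Fint sideA sideB (W0 facesOf Fint sideA sideB τ mK ε β Uc Un) K σ
  else
    -(τ σ) * ∑ j ∈ Finset.univ.erase i, Kc i j *
        (edgeVal sideA sideB Un j σ * jump Fint sideA sideB (Un i) K σ
          - edgeVal sideA sideB Un i σ * jump Fint sideA sideB (Un j) K σ)
      + τ σ * Kc i 0 * edgeVal sideA sideB Un i σ * edgeVal sideA sideB Un 0 σ *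
          jump Fint sideA sideB (W0 facesOf Fint sideA sideB τ mK ε β Uc Un) K σ

/-- One backward Euler step of the finite volume scheme:
`m_K (U_{i,K}^{p+1} − U_{i,K}^p)/Δt + Σ_{σ∈ℰ_{K,int}} J_{i,Kσ}^{p+1} = 0`. -/
def SchemeStep {T F : Type*} [DecidableEq T] [DecidableEq F]
    (facesOf : T → Finset F) (Fint : Finset F) (sideA sideB : F → T)
    (τ : F → ℝ) (mK : T → ℝ) (ε β : ℝ) {n : ℕ}
    (Kc : Fin (n + 1) → Fin (n + 1) → ℝ) (Δt : ℝ)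
    (Uc Un : Fin (n + 1) → T → ℝ) : Prop :=
  ∀ i K, mK K * (Un i K - Uc i K) / Δt
      + ∑ σ ∈ (facesOf K).filter (· ∈ Fint),
          dflux facesOf Fint sideA sideB τ mK ε β Kc Uc Un i K σ = 0

lemma logMean_nonneg (a b : ℝ) : 0 ≤ logMean a b := by
  unfold logMean
  split_ifs with h1 h2
  · exact le_rfl
  · have ha : 0 < a := lt_of_lt_of_le (lt_of_not_ge h1) (min_le_left a b)
    exact ha.le
  · have ha : 0 < a := lt_of_lt_of_le (lt_of_not_ge h1) (min_le_left a b)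
    have hb : 0 < b := lt_of_lt_of_le (lt_of_not_ge h1) (min_le_right a b)
    rcases lt_or_gt_of_ne h2 with h | h
    · have hl : Real.log a < Real.log b := Real.log_lt_log ha h
      exact div_nonneg_iff.mpr (Or.inr ⟨by linarith, by linarith⟩)
    · have hl : Real.log b < Real.log a := Real.log_lt_log hb h
      exact div_nonneg (by linarith) (by linarith)

lemma logMean_eq_zero {a b : ℝ} (h : a ≤ 0 ∨ b ≤ 0) : logMean a b = 0 := by
  unfold logMean
  rw [if_pos]
  rcases h with h | h
  · exact le_trans (min_le_left a b) h
  · exact le_trans (min_le_right a b) h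

theorem statement_17 {T F : Type*} [Fintype T] [Fintype F]
    [DecidableEq T] [DecidableEq F]
    -- the admissible mesh
    (facesOf : T → Finset F) (Fint : Finset F) (sideA sideB : F → T)
    (hAB : ∀ σ ∈ Fint, sideA σ ≠ sideB σ)
    (hmemA : ∀ σ ∈ Fint, σ ∈ facesOf (sideA σ))
    (hmemB : ∀ σ ∈ Fint, σ ∈ facesOf (sideB σ))
    (hint : ∀ σ ∈ Fint, ∀ K, σ ∈ facesOf K → K = sideA σ ∨ K = sideB σ)
    (hext : ∀ σ ∉ Fint, ∃! K, σ ∈ facesOf K)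
    (τ : F → ℝ) (hτ : ∀ σ, 0 < τ σ)
    (mK : T → ℝ) (hmKpos : ∀ K, 0 < mK K)
    -- parameters of the system
    {n : ℕ} (ε β : ℝ) (hε : 0 < ε) (hβ : 0 < β)
    (Kc : Fin (n + 1) → Fin (n + 1) → ℝ)
    (hKsym : ∀ i j, Kc i j = Kc j i) (hKpos : ∀ i j, i ≠ j → 0 < Kc i j)
    (Δt : ℝ) (hΔt : 0 < Δt)
    -- one step of the scheme, from U^p =: Uc to U^{p+1} =: Un
    (Uc Un : Fin (n + 1) → T → ℝ)
    (hstep : SchemeStep facesOf Fint sideA sideB τ mK ε β Kc Δt Uc Un) :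
    ((∀ i K, 0 ≤ Uc i K) → ∀ i K, 0 ≤ Un i K) ∧
    ((∀ i K, 0 < Uc i K) → ∀ i K, 0 < Un i K) := by
  have key : ∀ i K, (∀ L, Un i K ≤ Un i L) → Un i K ≤ 0 → Uc i K ≤ Un i K := by
    intro i K hmin hK0
    have hflux : ∀ σ ∈ (facesOf K).filter (· ∈ Fint),
        dflux facesOf Fint sideA sideB τ mK ε β Kc Uc Un i K σ ≤ 0 := by
      intro σ hσ
      simp only [Finset.mem_filter] at hσ
      obtain ⟨hσK, hσF⟩ := hσ
      have hside := hint σ hσF K hσK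
      have hEi : edgeVal sideA sideB Un i σ = 0 := by
        unfold edgeVal
        apply logMean_eq_zero
        rcases hside with h | h
        · left; rw [← h]; exact hK0
        · right; rw [← h]; exact hK0
      have hjmp : 0 ≤ jump Fint sideA sideB (Un i) K σ := by
        unfold jump mirror
        rw [if_pos hσF]
        split_ifs with h
        · linarith [hmin (sideB σ)]
        · linarith [hmin (sideA σ)]
      unfold dflux
      split_ifs with hi
      · subst hi
        rw [hEi]
        have h1 : 0 ≤ ∑ j ∈ Finset.univ.erase (0 : Fin (n + 1)), Kc j 0 *
            (edgeVal sideA sideB Un j σ * jump Fint sideA sideB (Un 0) K σ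
              - 0 * jump Fint sideA sideB (Un j) K σ) := by
          apply Finset.sum_nonneg
          intro j hj
          have hj0 : j ≠ 0 := (Finset.mem_erase.mp hj).1
          have hK := (hKpos j 0 hj0).le
          have hE := logMean_nonneg (Un j (sideA σ)) (Un j (sideB σ))
          unfold edgeVal
          nlinarith [mul_nonneg hE hjmp]
        have h2 : ∑ j ∈ Finset.univ.erase (0 : Fin (n + 1)), Kc j 0 *
            edgeVal sideA sideB Un j σ * 0 *
            jump Fint sideA sideB (W0 facesOf Fint sideA sideB τ mK ε β Uc Un) K σ = 0 := by
          apply Finset.sum_eq_zero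
          intro j _
          ring
        rw [h2]
        have := (hτ σ).le
        nlinarith [mul_nonneg this h1]
      · rw [hEi]
        have h1 : 0 ≤ ∑ j ∈ Finset.univ.erase i, Kc i j *
            (edgeVal sideA sideB Un j σ * jump Fint sideA sideB (Un i) K σ
              - 0 * jump Fint sideA sideB (Un j) K σ) := by
          apply Finset.sum_nonneg
          intro j hj
          have hji : j ≠ i := (Finset.mem_erase.mp hj).1
          have hK := (hKpos i j (Ne.symm hji)).le
          have hE := logMean_nonneg (Un j (sideA σ)) (Un j (sideB σ))
          unfold edgeVal
          nlinarith [mul_nonneg hE hjmp]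
        have := (hτ σ).le
        nlinarith [mul_nonneg this h1]
    have hsum : ∑ σ ∈ (facesOf K).filter (· ∈ Fint),
        dflux facesOf Fint sideA sideB τ mK ε β Kc Uc Un i K σ ≤ 0 :=
      Finset.sum_nonpos hflux
    have heq := hstep i K
    have hdiv : 0 ≤ mK K * (Un i K - Uc i K) / Δt := by linarith
    have hnum : 0 ≤ mK K * (Un i K - Uc i K) := by
      rcases div_nonneg_iff.mp hdiv with ⟨h, _⟩ | ⟨_, h⟩
      · exact h
      · linarith
    nlinarith [hmKpos K]
  constructor
  · intro hUc i K
    obtain ⟨K₀, -, hK₀⟩ := Finset.exists_min_image Finset.univ (Un i) ⟨K, Finset.mem_univ K⟩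
    by_contra h
    push_neg at h
    have hmin : ∀ L, Un i K₀ ≤ Un i L := fun L => hK₀ L (Finset.mem_univ L)
    have h0 : Un i K₀ ≤ 0 := le_trans (hmin K) h.le
    have hkey := key i K₀ hmin h0
    have := hUc i K₀
    linarith [hmin K]
  · intro hUc i K
    obtain ⟨K₀, -, hK₀⟩ := Finset.exists_min_image Finset.univ (Un i) ⟨K, Finset.mem_univ K⟩
    by_contra h
    push_neg at h
    have hmin : ∀ L, Un i K₀ ≤ Un i L := fun L => hK₀ L (Finset.mem_univ L)
    have h0 : Un i K₀ ≤ 0 := le_trans (hmin K) h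
    have hkey := key i K₀ hmin h0
    have := hUc i K₀
    linarith [hmin K]
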